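/- Suppose X is a spiny symmetric set with dim(X) ≥ n. Then the degree of sk_{n−1} X equals exactly n. -/

import Mathlib

open CategoryTheory Opposite

/-- The skeleton of the category of finite nonempty sets: objects are natural
numbers `n`, standing for `[n] = {0, …, n}`, morphisms are all functions. -/
def Ups : Type := ℕ

/-- The natural number underlying an object of `Ups`. -/
def Ups.toNat : Ups → ℕ := fun n => n

/-- The object `[n]` of `Ups`. -/
def Ups.of : ℕ → Ups := fun n => n

instance : Category Ups where
  Hom n m := Fin (n.toNat + 1) → Fin (m.toNat + 1)
  id _ := _root_.id
  comp f g := g ∘ f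

/-- A symmetric set is a presheaf on `Ups`. -/
abbrev SymmSet := Upsᵒᵖ ⥤ Type

/-- The map `ε_{ij} : [1] → [n]` sending `0, 1` to `i, j`. -/
def eps (n : ℕ) (i j : Fin (n + 1)) : Ups.of 1 ⟶ Ups.of n :=
  fun k => if k = 0 then i else j

/-- The set of `n`-simplices of a symmetric set. -/
abbrev simp (X : SymmSet) (n : ℕ) : Type := X.obj (op (Ups.of n))

/-- The Bousfield–Segal map `𝓑ₙ : Xₙ → X₁ⁿ`, `x ↦ (ε₀₁*x, …, ε₀ₙ*x)`. -/
def BS (X : SymmSet) (n : ℕ) (x : simp X n) : Fin n → simp X 1 :=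
  fun k => X.map (eps n 0 k.succ).op x

/-- The Segal map `𝓔ₙ : Xₙ → X₁ⁿ`, `x ↦ (ε₀₁*x, ε₁₂*x, …, ε₍ₙ₋₁₎ₙ*x)`. -/
def ES (X : SymmSet) (n : ℕ) (x : simp X n) : Fin n → simp X 1 :=
  fun k => X.map (eps n k.castSucc k.succ).op x

/-- The canonical map `μ_X` to matrices, `x ↦ (ε_{ij}* x)_{ij}`. -/
def muMat (X : SymmSet) (n : ℕ) (x : simp X n) :
    Fin (n + 1) → Fin (n + 1) → simp X 1 :=
  fun i j => X.map (eps n i j).op x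

/-- A symmetric set is spiny if all Bousfield–Segal maps are injective. -/
def Spiny (X : SymmSet) : Prop := ∀ n, Function.Injective (BS X n)
/-- The matrix symmetric set `Mat(S)`: `n`-simplices are functions `[n]×[n] → S`. -/
def MatS (S : Type) : SymmSet where
  obj k := Fin (k.unop.toNat + 1) → Fin (k.unop.toNat + 1) → S
  map f := TypeCat.ofHom fun M => fun a b => M (f.unop a) (f.unop b)
  map_id := by intros; rfl
  map_comp := by intros; rfl

/-- An `n`-simplex is degenerate if it is `ρ* y` for a noninvertible surjection
`ρ : [n] ↠ [m]` and an `m`-simplex `y`. -/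
def Degen (X : SymmSet) (n : ℕ) (x : simp X n) : Prop :=
  ∃ (m : ℕ) (ρ : Ups.of n ⟶ Ups.of m), Function.Surjective ρ ∧
    ¬ Function.Bijective ρ ∧ ∃ y : simp X m, x = X.map ρ.op y

/-- The `d`-skeleton of a symmetric set, as a symmetric subset. -/
def skel (X : SymmSet) (d : ℕ) : SymmSet where
  obj k := {x : X.obj k // ∃ (i : ℕ) (_ : i ≤ d) (α : k.unop ⟶ Ups.of i)
      (y : simp X i), x = X.map α.op y}
  map f := TypeCat.ofHom fun x => ⟨X.map f x.1, by
    obtain ⟨i, hi, α, y, hy⟩ := x.2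
    refine ⟨i, hi, f.unop ≫ α, y, ?_⟩
    rw [hy, ← FunctorToTypes.map_comp_apply]
    rfl⟩
  map_id := by
    intro k; ext x
    exact X.map_id_apply k x.1
  map_comp := by
    intro k k' k'' f g; ext x
    exact X.map_comp_apply f g x.1

/-- A symmetric set is `d`-skeletal when all simplices above dimension `d`
are degenerate. -/
def SkeletalLE (X : SymmSet) (d : ℕ) : Prop :=
  ∀ n, d < n → ∀ x : simp X n, Degen X n x

/-- `X` has dimension `d` when `d` is the least integer such that `X` is
`d`-skeletal. -/
def HasDim (X : SymmSet) (d : ℕ) : Prop :=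
  IsLeast {m | SkeletalLE X m} d

/-- A symmetric set is reduced when it has exactly one `0`-simplex. -/
def Reduced (X : SymmSet) : Prop :=
  Nonempty (simp X 0) ∧ Subsingleton (simp X 0)

/-- A partial group is a reduced spiny symmetric set. -/
def IsPartialGroup (X : SymmSet) : Prop := Reduced X ∧ Spiny X

/-- A partial group is trivial when it has no nonidentity elements. -/
def TrivialPG (X : SymmSet) : Prop := Subsingleton (simp X 1)

/-- The order of a partial group: the number of its elements (edges). -/
noncomputable def orderPG (X : SymmSet) : ℕ := Nat.card (simp X 1)

/-- An edge is an identity if it is in the image of the degeneracy `X₀ → X₁`. -/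
def isIdent (X : SymmSet) (e : simp X 1) : Prop :=
  ∃ v : simp X 0, e = X.map (Quiver.Hom.op
    ((fun _ => 0 : Fin 2 → Fin 1) : Ups.of 1 ⟶ Ups.of 0)) v

/-- The source vertex of an edge. -/
def srcE (X : SymmSet) (e : simp X 1) : simp X 0 :=
  X.map (Quiver.Hom.op ((fun _ => 0 : Fin 1 → Fin 2) : Ups.of 0 ⟶ Ups.of 1)) e

/-- `X` has (higher Segal) degree at most `k`: for each starry word `w` of
length `n+1 ≥ k+1`, if the last `k+1` faces `d_{n+1-k} w, …, d_{n+1} w` of `w`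
are Bousfield–Segal images of simplices, then so is `w`. -/
def HasDegLE (X : SymmSet) (k : ℕ) : Prop :=
  ∀ n, k ≤ n → ∀ w : Fin (n + 1) → simp X 1,
    (∀ a b, srcE X (w a) = srcE X (w b)) →
    (∀ i : Fin (n + 1), n ≤ (i : ℕ) + k →
      (fun j : Fin n => w (i.succAbove j)) ∈ Set.range (BS X n)) →
    w ∈ Set.range (BS X (n + 1))

/-- `X` has degree `d`: `d` is the least `k ≥ 1` with `HasDegLE X k`. -/
def DegreeIs (X : SymmSet) (d : ℕ) : Prop :=
  IsLeast {k | 1 ≤ k ∧ HasDegLE X k} d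

/-- `W`, with structure maps `i, j`, is a coproduct of `Y` and `Z` in the
category of partial groups. -/
def IsPGCoproduct (W Y Z : SymmSet) (i : Y ⟶ W) (j : Z ⟶ W) : Prop :=
  ∀ V : SymmSet, IsPartialGroup V → ∀ (f : Y ⟶ V) (g : Z ⟶ V),
    ∃! h : W ⟶ V, i ≫ h = f ∧ j ≫ h = g

/-- The nerve of a group `G`, as a symmetric set: an `n`-simplex is a matrix
`(g_{ij})` of elements of `G` satisfying the cocycle condition. -/
def grpNerve (G : Type) [Group G] : SymmSet where
  obj k := {M : Fin (k.unop.toNat + 1) → Fin (k.unop.toNat + 1) → G //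
      ∀ i j l, M i j * M j l = M i l}
  map f := TypeCat.ofHom fun M => ⟨fun a b => M.1 (f.unop a) (f.unop b),
    fun i j l => M.2 (f.unop i) (f.unop j) (f.unop l)⟩
  map_id := by intro k; rfl
  map_comp := by intros; rfl


/-!
The upper bound is `deg Y ≤ dim Y + 1` for `Y = sk_{n-1} X`, which is `(n - 1)`-skeletal.
For the lower bound, pick a nondegenerate simplex `x` of `X` of dimension `≥ n`. In a spiny
symmetric set a simplex is degenerate exactly when two of its edges `ε₀ₐ*, ε₀ᵦ*` (`a < b`)
agree. The edges of the front `n`-face `z` of `x` form a starry word in `sk_{n-1} X` all of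
whose faces lift; if the degree were `≤ n - 1`, the word would lift as well, and by spininess
its lift is `z`. So `z` lies in the `(n - 1)`-skeleton and repeats an edge, hence so does `x`.
-/

namespace Fin

lemma succAbove_insertNth_id {m : ℕ} (b : Fin (m + 2)) (a : Fin (m + 1)) (c : Fin (m + 2)) :
    b.succAbove (insertNth (α := fun _ => Fin (m + 1)) b a id c) =
      if c = b then b.succAbove a else c := by
  induction c using succAboveCases b with
  | x => simp
  | p d => simp [succAbove_ne]

lemma succ_succAbove_succAbove_of_le {m : ℕ} {p j : Fin (m + 1)} (h : p ≤ j) (l : Fin m) :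
    j.succ.succAbove (p.succAbove l) = p.castSucc.succAbove (j.succAbove l) := by
  rw [le_def] at h
  ext
  simp only [succAbove, lt_def, val_castSucc, val_succ, apply_ite Fin.val]
  split_ifs <;> omega

end Fin

namespace SymmSet

def const (n m : ℕ) (i : Fin (m + 1)) : Ups.of n ⟶ Ups.of m := fun _ => i

lemma eps_comp {n m : ℕ} (i j : Fin (n + 1)) (f : Ups.of n ⟶ Ups.of m) :
    eps n i j ≫ f = eps m (f i) (f j) := by
  funext k
  show f (eps n i j k) = eps m (f i) (f j) k
  by_cases hk : k = 0 <;> simp [eps, hk]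

lemma eps_self (n : ℕ) (i : Fin (n + 1)) : eps n i i = const 1 0 0 ≫ const 0 n i := by
  funext k
  exact ite_self i

variable {X : SymmSet}

lemma map_map {a b c : ℕ} (f : Ups.of a ⟶ Ups.of b) (g : Ups.of b ⟶ Ups.of c) (x : simp X c) :
    X.map f.op (X.map g.op x) = X.map (f ≫ g).op x := by
  rw [op_comp, Functor.map_comp_apply]

lemma map_map_eps {n m : ℕ} (f : Ups.of n ⟶ Ups.of m) (i j : Fin (n + 1)) (x : simp X m) :
    X.map (eps n i j).op (X.map f.op x) = X.map (eps m (f i) (f j)).op x := by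
  rw [map_map, eps_comp]

lemma BS_map {n m : ℕ} (f : Ups.of n ⟶ Ups.of m) (x : simp X m) (k : Fin n) :
    BS X n (X.map f.op x) k = X.map (eps m (f (0 : Fin (n + 1))) (f k.succ)).op x :=
  map_map_eps f 0 k.succ x

lemma srcE_map_eps {m : ℕ} (x : simp X m) (i j : Fin (m + 1)) :
    srcE X (X.map (eps m i j).op x) = X.map (const 0 m i).op x :=
  map_map (const 0 1 0) _ x

lemma map_eps_zero_zero_eq {m m' : ℕ} {x : simp X m} {x' : simp X m'} {j : Fin (m + 1)}
    {j' : Fin (m' + 1)}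
    (h : srcE X (X.map (eps m 0 j).op x) = srcE X (X.map (eps m' 0 j').op x')) :
    X.map (eps m 0 0).op x = X.map (eps m' 0 0).op x' := by
  rw [srcE_map_eps, srcE_map_eps] at h
  rw [eps_self, eps_self, ← map_map, ← map_map, h]

lemma exists_lt_map_eps_eq_of_not_injective {m i : ℕ} (f : Ups.of m ⟶ Ups.of i)
    (hf : ¬ Function.Injective f) (t : simp X i) :
    ∃ a b : Fin (m + 1), a < b ∧
      X.map (eps m 0 b).op (X.map f.op t) = X.map (eps m 0 a).op (X.map f.op t) := by
  obtain ⟨a, b, hab, hne⟩ : ∃ a b : Fin (m + 1), f a = f b ∧ a ≠ b :=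
    Function.not_injective_iff.mp hf
  rcases hne.lt_or_gt with h | h
  · exact ⟨a, b, h, by rw [map_map_eps, map_map_eps, hab]⟩
  · exact ⟨b, a, h, by rw [map_map_eps, map_map_eps, hab]⟩

lemma exists_lt_map_eps_eq_of_degen {m : ℕ} {x : simp X m} (hx : Degen X m x) :
    ∃ a b : Fin (m + 1), a < b ∧ X.map (eps m 0 b).op x = X.map (eps m 0 a).op x := by
  obtain ⟨_, ρ, hsurj, hbij, y, rfl⟩ := hx
  exact exists_lt_map_eps_eq_of_not_injective ρ (fun hinj => hbij ⟨hinj, hsurj⟩) y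

/-- `x` is the pullback of its `b`-th face along the surjection collapsing `b` onto `a`: by
spininess it suffices to compare edges `ε₀ₖ*`. -/
theorem degen_of_map_eps_eq (hX : Spiny X) {m : ℕ} {x : simp X (m + 1)}
    {a b : Fin (m + 2)} (hab : a < b)
    (h : X.map (eps (m + 1) 0 b).op x = X.map (eps (m + 1) 0 a).op x) :
    Degen X (m + 1) x := by
  obtain ⟨a, rfl⟩ := Fin.exists_succAbove_eq hab.ne
  let ρ : Ups.of (m + 1) ⟶ Ups.of m := Fin.insertNth (α := fun _ => Fin (m + 1)) b a id
  let ι : Ups.of m ⟶ Ups.of (m + 1) := b.succAbove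
  have hρι (c : Fin (m + 2)) : (ρ ≫ ι) c = if c = b then b.succAbove a else c :=
    Fin.succAbove_insertNth_id b a c
  have hsurj : Function.Surjective ρ := fun (d : Fin (m + 1)) =>
    ⟨b.succAbove d, Fin.insertNth_apply_succAbove (α := fun _ => Fin (m + 1)) b a id d⟩
  have hρb : ρ b = a := Fin.insertNth_apply_same (α := fun _ => Fin (m + 1)) b a id
  have hρa : ρ (b.succAbove a) = a :=
    Fin.insertNth_apply_succAbove (α := fun _ => Fin (m + 1)) b a id a
  have hninj : ¬ Function.Injective ρ := fun hinj =>
    Fin.succAbove_ne b a (hinj (hρa.trans hρb.symm))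
  refine ⟨m, ρ, hsurj, fun hbij => hninj hbij.1, X.map ι.op x,
    hX (m + 1) (funext fun k => ?_)⟩
  have h0 : (ρ ≫ ι) (0 : Fin (m + 2)) = 0 :=
    (hρι 0).trans (if_neg ((Fin.zero_le _).trans_lt hab).ne)
  rw [BS, map_map, BS_map, h0, hρι]
  by_cases hk : k.succ = b
  · rw [if_pos hk, hk, h]
    rfl
  · rw [if_neg hk]
    rfl

def skelMk {d i : ℕ} (hi : i ≤ d) (y : simp X i) : simp (skel X d) i :=
  ⟨y, i, hi, 𝟙 _, y, by rw [op_id, Functor.map_id_apply]⟩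

theorem spiny_skel (hX : Spiny X) (d : ℕ) : Spiny (skel X d) :=
  fun n _ _ h => Subtype.ext (hX n (funext fun k => congrArg Subtype.val (congrFun h k)))

lemma exists_lt_map_eps_eq_of_skel {d m : ℕ} (hdm : d < m) (x : simp (skel X d) m) :
    ∃ a b : Fin (m + 1), a < b ∧ X.map (eps m 0 b).op x.1 = X.map (eps m 0 a).op x.1 := by
  obtain ⟨i, hi, α, t, hx⟩ := x.2
  have hα : ¬ Function.Injective α := fun hinj => by
    have := Fin.le_of_injective (m := m + 1) (n := i + 1) α hinj
    omega
  rw [hx]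
  exact exists_lt_map_eps_eq_of_not_injective α hα t

theorem skeletalLE_skel (hX : Spiny X) (d : ℕ) : SkeletalLE (skel X d) d := by
  rintro n hdm x
  obtain ⟨m, rfl⟩ : ∃ m, n = m + 1 := Nat.exists_eq_succ_of_ne_zero (by omega)
  obtain ⟨a, b, hab, h⟩ := exists_lt_map_eps_eq_of_skel hdm x
  exact degen_of_map_eps_eq (spiny_skel hX d) hab (Subtype.ext h)

theorem hasDegLE_mono {Y : SymmSet} {k k' : ℕ} (H : HasDegLE Y k) (h : k ≤ k') :
    HasDegLE Y k' :=
  fun n hn w hs hf => H n (h.trans hn) w hs fun i hi => hf i (by omega)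

def face (m : ℕ) (p : Fin (m + 1)) : Ups.of m ⟶ Ups.of (m + 1) := p.succ.succAbove

lemma BS_map_face {m : ℕ} (x : simp X (m + 1)) (p : Fin (m + 1)) :
    BS X m (X.map (face m p).op x) = fun l => BS X (m + 1) x (p.succAbove l) := by
  funext l
  rw [BS_map]
  show X.map (eps (m + 1) (p.succ.succAbove 0) (p.succ.succAbove l.succ)).op x = _
  rw [Fin.succ_succAbove_zero, Fin.succ_succAbove_succ]
  rfl

/-- The preimage is `x` pulled back along the map `[m + 2] → [m + 1]` that sends the omitted
vertex `i + 1` to `t`. -/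
lemma mem_range_BS_of_face {m : ℕ} {w : Fin (m + 2) → simp X 1} {i : Fin (m + 2)}
    {x : simp X (m + 1)} (hx : BS X (m + 1) x = fun j => w (i.succAbove j)) {t : Fin (m + 2)}
    (ht : X.map (eps (m + 1) 0 t).op x = w i) :
    w ∈ Set.range (BS X (m + 2)) := by
  let φ : Ups.of (m + 2) ⟶ Ups.of (m + 1) :=
    Fin.cons (α := fun _ => Fin (m + 2)) 0
      (Fin.insertNth (α := fun _ => Fin (m + 2)) i t Fin.succ)
  refine ⟨X.map φ.op x, funext fun k => ?_⟩
  rw [BS_map]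
  show X.map (eps (m + 1) 0 (Fin.insertNth (α := fun _ => Fin (m + 2)) i t Fin.succ k)).op x =
    w k
  induction k using Fin.succAboveCases i with
  | x => rw [Fin.insertNth_apply_same, ht]
  | p j => rw [Fin.insertNth_apply_succAbove]; exact congrFun hx j

/-- Realize all but the last letter of a word by a simplex `x`; it is degenerate, so its `b`-th
letter repeats its `a`-th one (`a < b`), or is the identity if `a = 0`. That letter may then be
dropped from the word, and the remaining face is realized either by hypothesis or, by
induction, from its own last faces. -/
theorem hasDegLE_succ_of_skeletalLE {Y : SymmSet} {d : ℕ} (hY : SkeletalLE Y d) :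
    HasDegLE Y (d + 1) := by
  intro n
  induction n using Nat.strong_induction_on with
  | _ n IH =>
  intro hn w hstar hfaces
  obtain ⟨m, rfl⟩ : ∃ m, n = m + 1 := ⟨n - 1, by omega⟩
  obtain ⟨x, hx⟩ := hfaces (Fin.last (m + 1)) (by simp)
  have hletter (k : Fin (m + 1)) : Y.map (eps (m + 1) 0 k.succ).op x = w k.castSucc := by
    rw [← Fin.succAbove_last_apply]
    exact congrFun hx k
  obtain ⟨a, b, hab, hxab⟩ := exists_lt_map_eps_eq_of_degen (hY (m + 1) (by omega) x)
  obtain ⟨b, rfl⟩ := Fin.exists_succ_eq_of_ne_zero (Fin.ne_zero_of_lt hab)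
  have hface : (fun j => w (b.castSucc.succAbove j)) ∈ Set.range (BS Y (m + 1)) := by
    by_cases hb : m + 1 ≤ b.castSucc + (d + 1)
    · exact hfaces _ hb
    refine IH m (by omega) (by omega) _ (fun _ _ => hstar _ _) fun j hj => ?_
    obtain ⟨z, hz⟩ := hfaces j.succ (by simp only [Fin.val_succ]; omega)
    refine ⟨Y.map (face m b).op z, ?_⟩
    rw [BS_map_face, hz]
    funext l
    have hbj : b ≤ j := by
      rw [Fin.le_def]
      simp only [Fin.val_castSucc] at hb
      omega
    exact congrArg w (Fin.succ_succAbove_succAbove_of_le hbj l)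
  obtain ⟨x', hx'⟩ := hface
  have hletter' (k : Fin (m + 1)) :
      Y.map (eps (m + 1) 0 k.succ).op x' = w (b.castSucc.succAbove k) :=
    congrFun hx' k
  cases a using Fin.cases with
  | zero =>
    refine mem_range_BS_of_face hx' (t := 0) ?_
    rw [← hletter, hxab]
    exact map_eps_zero_zero_eq (j := (0 : Fin (m + 1)).succ) (j' := (0 : Fin (m + 1)).succ)
      (by rw [hletter', hletter, hstar])
  | succ a =>
    obtain ⟨j, hj⟩ := Fin.exists_succAbove_eq (x := a.castSucc) (y := b.castSucc)
      (Fin.castSucc_lt_castSucc_iff.mpr (Fin.succ_lt_succ_iff.mp hab)).ne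
    refine mem_range_BS_of_face hx' (t := j.succ) ?_
    rw [hletter', hj, ← hletter, ← hletter, hxab]

theorem not_hasDegLE_skel (hX : Spiny X) {d : ℕ} (hd : 1 ≤ d) (hdim : ¬ SkeletalLE X d) :
    ¬ HasDegLE (skel X d) d := by
  intro H
  obtain ⟨n, hdn, x, hx⟩ : ∃ n, d < n ∧ ∃ x : simp X n, ¬ Degen X n x := by
    simpa [SkeletalLE] using hdim
  obtain ⟨m, rfl⟩ : ∃ m, n = m + 1 := Nat.exists_eq_succ_of_ne_zero (by omega)
  let ψ : Ups.of (d + 1) ⟶ Ups.of (m + 1) := Fin.castLE (n := d + 2) (m := m + 2) (by omega)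
  let z := X.map ψ.op x
  let w : Fin (d + 1) → simp (skel X d) 1 := fun k => skelMk hd (BS X (d + 1) z k)
  have hstar (a b : Fin (d + 1)) : srcE (skel X d) (w a) = srcE (skel X d) (w b) :=
    Subtype.ext ((srcE_map_eps z 0 a.succ).trans (srcE_map_eps z 0 b.succ).symm)
  have hfaces (i : Fin (d + 1)) (_ : d ≤ i + d) :
      (fun j => w (i.succAbove j)) ∈ Set.range (BS (skel X d) d) :=
    ⟨skelMk le_rfl (X.map (face d i).op z),
      funext fun l => Subtype.ext (congrFun (BS_map_face z i) l)⟩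
  obtain ⟨y, hy⟩ := H d le_rfl w hstar hfaces
  have hyz : y.1 = z := hX _ (funext fun k => congrArg Subtype.val (congrFun hy k))
  obtain ⟨a, b, hab, h⟩ := exists_lt_map_eps_eq_of_skel (Nat.lt_succ_self d) y
  rw [hyz, map_map_eps, map_map_eps] at h
  exact hx (degen_of_map_eps_eq hX (Fin.strictMono_castLE _ hab) h)

end SymmSet

/-- If `X` is a spiny symmetric set of dimension at least `n` (i.e. `X` is not
`(n-1)`-skeletal), then the degree of its `(n-1)`-skeleton is exactly `n`. -/
theorem degree_skel_eq (X : SymmSet) (hX : Spiny X) (n : ℕ) (hn : 1 ≤ n)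
    (hdim : ¬ SkeletalLE X (n - 1)) :
    DegreeIs (skel X (n - 1)) n := by
  obtain ⟨d, rfl⟩ : ∃ d, n = d + 1 := Nat.exists_eq_succ_of_ne_zero (by omega)
  rw [Nat.add_sub_cancel] at hdim ⊢
  refine ⟨⟨hn, SymmSet.hasDegLE_succ_of_skeletalLE (SymmSet.skeletalLE_skel hX d)⟩, ?_⟩
  rintro k ⟨hk, H⟩
  by_contra! hkd
  exact SymmSet.not_hasDegLE_skel hX (by omega) hdim (SymmSet.hasDegLE_mono H (by omega))
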